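/- Let n ≥ 1 and let F be an upset of a De Morgan lattice L. Then F is a prime n-filter on L if and only if there exists a homomorphism of De Morgan lattices h : L → (Fin n → Bool × Bool) (into DMₙ) such that F = {x : ∃ i, (h x i).1 = true}, i.e., F = h⁻¹(Qₙ). -/

import Mathlib

/-- A De Morgan lattice: a distributive lattice with an antitone involution. -/
class DeMorgan (L : Type*) extends DistribLattice L where
  dneg : L → L
  dneg_dneg : ∀ x : L, dneg (dneg x) = x
  dneg_sup : ∀ x y : L, dneg (x ⊔ y) = dneg x ⊓ dneg y

prefix:max "∼" => DeMorgan.dneg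

section Defs

variable {α : Type*}

/-- An upward closed subset of a lattice. -/
def IsUpset [Lattice α] (F : Set α) : Prop :=
  ∀ ⦃x y : α⦄, x ∈ F → x ≤ y → y ∈ F

/-- A lattice filter: an upset closed under binary meets. -/
def IsLatFilter [Lattice α] (F : Set α) : Prop :=
  IsUpset F ∧ ∀ x y : α, x ∈ F → y ∈ F → x ⊓ y ∈ F

/-- An `n`-filter: an upset such that for every nonempty finite `Y`, if the meet of
every nonempty subset of `Y` of size at most `n` lies in `F`, then so does the meet of `Y`. -/
def IsNFilter [Lattice α] (n : ℕ) (F : Set α) : Prop :=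
  IsUpset F ∧ ∀ (Y : Finset α) (hY : Y.Nonempty),
    (∀ (X : Finset α) (hX : X.Nonempty), X ⊆ Y → X.card ≤ n → X.inf' hX id ∈ F) →
    Y.inf' hY id ∈ F

/-- A prime upset: `x ⊔ y ∈ F` implies `x ∈ F` or `y ∈ F`. -/
def IsPrimeUpset [Lattice α] (F : Set α) : Prop :=
  ∀ x y : α, x ⊔ y ∈ F → x ∈ F ∨ y ∈ F

/-- A downward closed subset of a lattice. -/
def IsDownset [Lattice α] (I : Set α) : Prop :=
  ∀ ⦃x y : α⦄, x ∈ I → y ≤ x → y ∈ I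

/-- A lattice ideal: a downset closed under binary joins. -/
def IsIdeal [Lattice α] (I : Set α) : Prop :=
  IsDownset I ∧ ∀ x y : α, x ∈ I → y ∈ I → x ⊔ y ∈ I

/-- An `n`-ideal: the order dual notion of an `n`-filter. -/
def IsNIdeal [Lattice α] (n : ℕ) (I : Set α) : Prop :=
  IsDownset I ∧ ∀ (Y : Finset α) (hY : Y.Nonempty),
    (∀ (X : Finset α) (hX : X.Nonempty), X ⊆ Y → X.card ≤ n → X.sup' hX id ∈ I) →
    Y.sup' hY id ∈ I

variable {L : Type*} [DeMorgan L]

/-- Almost complete upset: `x ∈ F` implies `x ⊓ (y ⊔ ∼y) ∈ F`. -/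
def AlmostComplete (F : Set L) : Prop := ∀ x ∈ F, ∀ y : L, x ⊓ (y ⊔ ∼y) ∈ F

/-- Complete upset: almost complete and nonempty. -/
def IsCompleteUpset (F : Set L) : Prop := AlmostComplete F ∧ F.Nonempty

/-- Almost consistent upset: `(x ⊓ ∼x) ⊔ y ∈ F` implies `y ∈ F`. -/
def AlmostConsistent (F : Set L) : Prop := ∀ x y : L, (x ⊓ ∼x) ⊔ y ∈ F → y ∈ F

/-- Consistent upset: almost consistent and not total. -/
def IsConsistentUpset (F : Set L) : Prop := AlmostConsistent F ∧ F ≠ Set.univ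

/-- Classical upset: complete and consistent. -/
def IsClassicalUpset (F : Set L) : Prop := IsCompleteUpset F ∧ IsConsistentUpset F

/-- Kalman upset. -/
def IsKalmanUpset (F : Set L) : Prop :=
  ∀ x y z u : L, ((x ⊓ ∼x) ⊓ z) ⊔ u ∈ F → ((y ⊔ ∼y) ⊓ z) ⊔ u ∈ F

/-- A homomorphism of De Morgan lattices. -/
def IsDMHom {L M : Type*} [DeMorgan L] [DeMorgan M] (h : L → M) : Prop :=
  (∀ x y : L, h (x ⊓ y) = h x ⊓ h y) ∧ (∀ x y : L, h (x ⊔ y) = h x ⊔ h y) ∧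
    ∀ x : L, h (∼x) = ∼(h x)

/-- The filter generated by all elements of the form `x ⊔ ∼x`. -/
def Fcomp (L : Type*) [DeMorgan L] : Set L :=
  {a | ∃ (s : Finset L) (hs : s.Nonempty), s.inf' hs (fun x => x ⊔ ∼x) ≤ a}

/-- The `n`-filter generated by a set. -/
def nFilterGen (n : ℕ) (U : Set L) : Set L :=
  ⋂₀ {F : Set L | IsNFilter n F ∧ U ⊆ F}

/-- `Comp U`. -/
def CompCl (U : Set L) : Set L := {x | ∃ a ∈ U, ∃ f ∈ Fcomp L, a ⊓ f ≤ x}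

/-- `Cons U`. -/
def ConsCl (U : Set L) : Set L := {x | ∃ f ∈ Fcomp L, ∼f ⊔ x ∈ U}

/-- A congruence of De Morgan lattices, as a binary relation. -/
def IsCongruence (θ : L → L → Prop) : Prop :=
  Equivalence θ ∧
  (∀ a b c d : L, θ a b → θ c d → θ (a ⊓ c) (b ⊓ d)) ∧
  (∀ a b c d : L, θ a b → θ c d → θ (a ⊔ c) (b ⊔ d)) ∧
  ∀ a b : L, θ a b → θ (∼a) (∼b)

end Defs

/-- The four-element De Morgan lattice `DM₁` on `Bool × Bool`. -/
instance : DeMorgan (Bool × Bool) :=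
  { (inferInstance : DistribLattice (Bool × Bool)) with
    dneg := fun p => (!p.2, !p.1)
    dneg_dneg := by decide
    dneg_sup := by decide }

/-- Powers of `DM₁`, with componentwise operations. -/
instance {ι : Type*} : DeMorgan (ι → Bool × Bool) :=
  { (inferInstance : DistribLattice (ι → Bool × Bool)) with
    dneg := fun f i => ∼(f i)
    dneg_dneg := fun f => funext fun i => DeMorgan.dneg_dneg (f i)
    dneg_sup := fun f g => funext fun i => DeMorgan.dneg_sup (f i) (g i) }

/-!
A prime `n`-filter `F` is the union of the filters that are maximal among the filters contained
in `F`: each element of `F` lies in one of them by Zorn's lemma, and they are prime because `F`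
is. There are at most `n` of them: from `n + 1` of them one extracts `x₀, …, xₙ ∈ F` with all
pairwise meets outside `F`, and then the joins `sᵢ = ⨆_{j ≠ i} xⱼ` violate the `n`-filter
property. Listing these prime filters as `P₁, …, Pₙ` (with repetitions), the map
`x ↦ (x ∈ Pᵢ, ∼x ∉ Pᵢ)ᵢ` is the required homomorphism. Conversely, `h⁻¹(Qₙ)` is the union of
the `n` prime filters `{x | (h x i).1}`, and such a union is an `n`-filter: if the meet of `Y`
avoids every `Pᵢ`, pick `yᵢ ∈ Y \ Pᵢ`; the meet of these `n` elements avoids every `Pᵢ` too.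
-/

open Finset Function

theorem Set.exists_fin_range_eq_of_forall_card_le {β : Type*} {s : Set β} {n : ℕ}
    (hne : s.Nonempty) (h : ∀ k (f : Fin k → β), Injective f → range f ⊆ s → k ≤ n) :
    ∃ g : Fin n → β, range g = s := by
  have hfin : s.Finite := by
    by_contra hinf
    obtain ⟨t, hts, htn⟩ := Set.Infinite.exists_subset_card_eq hinf (n + 1)
    have := h _ (fun i => (t.equivFin.symm (i.cast htn.symm) : β))
      (fun i j hij => by simpa using Subtype.ext hij)
      (by rintro _ ⟨i, rfl⟩; exact hts (Subtype.mem _))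
    omega
  obtain ⟨k, f, hf, rfl⟩ := hfin.fin_param
  obtain ⟨m, rfl⟩ : ∃ m, k = m + 1 := Nat.exists_eq_succ_of_ne_zero (by rintro rfl; simp at hne)
  have hmn := h _ f hf subset_rfl
  refine ⟨fun i => f (Fin.clamp i m), Surjective.range_comp (fun j => ⟨⟨j, by omega⟩, ?_⟩) f⟩
  ext
  simpa [Fin.clamp] using Nat.le_of_lt_succ j.isLt

section Lattice

variable {α : Type*}

theorem IsPrimeUpset.exists_mem_of_sup'_mem [Lattice α] {F : Set α} (hF : IsPrimeUpset F)
    {ι : Type*} {s : Finset ι} (hs : s.Nonempty) {f : ι → α} (h : s.sup' hs f ∈ F) :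
    ∃ i ∈ s, f i ∈ F := by
  by_contra! hnot
  exact s.sup'_induction hs f (p := (· ∉ F))
    (fun a ha b hb hab => (hF a b hab).elim ha hb) hnot h

theorem IsPrimeUpset.exists_inf_mem_of_le_sup' [DistribLattice α] {F : Set α}
    (hF : IsPrimeUpset F) {ι : Type*} {s : Finset ι} (hs : s.Nonempty) {f : ι → α} {z : α}
    (hz : z ∈ F) (hle : z ≤ s.sup' hs f) : ∃ i ∈ s, z ⊓ f i ∈ F := by
  refine hF.exists_mem_of_sup'_mem hs ?_
  rwa [← sup'_inf_distrib_left, inf_eq_left.2 hle]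

theorem isLatFilter_Ici [Lattice α] (a : α) : IsLatFilter (Set.Ici a) :=
  ⟨fun _ _ hx hxy => le_trans hx hxy, fun _ _ hx hy => le_inf hx hy⟩

theorem isLatFilter_empty [Lattice α] : IsLatFilter (∅ : Set α) :=
  ⟨fun _ _ h => h.elim, fun _ _ h => h.elim⟩

theorem isLatFilter_setOf_eq_true [Lattice α] {g : α → Bool}
    (hg : ∀ x y, g (x ⊓ y) = g x ⊓ g y) : IsLatFilter {x | g x = true} := by
  refine ⟨fun x y hx hxy => ?_, fun x y hx hy => ?_⟩
  · have hgxy := hg x y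
    rw [inf_eq_left.2 hxy, hx] at hgxy
    simpa using hgxy.symm
  · simp [hg, hx.out, hy.out]

theorem isPrimeUpset_setOf_eq_true [Lattice α] {g : α → Bool}
    (hg : ∀ x y, g (x ⊔ y) = g x ⊔ g y) : IsPrimeUpset {x | g x = true} := by
  intro x y
  simp [hg]

theorem IsLatFilter.exists_le_forall [Lattice α] {P : Set α} (hP : IsLatFilter P)
    (hne : P.Nonempty) {κ : Type*} [Fintype κ] (f : κ → α) (hf : ∀ k, f k ∈ P) :
    ∃ x ∈ P, ∀ k, x ≤ f k := by
  cases isEmpty_or_nonempty κ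
  · obtain ⟨x, hx⟩ := hne
    exact ⟨x, hx, isEmptyElim⟩
  · exact ⟨univ.inf' univ_nonempty f,
      inf'_mem P (fun x hx y hy => hP.2 x y hx hy) _ _ _ fun k _ => hf k,
      fun k => inf'_le f (mem_univ k)⟩

theorem IsNFilter.univ_inf'_mem [Lattice α] {n : ℕ} {F : Set α} (hF : IsNFilter n F)
    {ι : Type*} [Fintype ι] [Nonempty ι] (f : ι → α)
    (h : ∀ (T : Finset ι) (hT : T.Nonempty), T.card ≤ n → T.inf' hT f ∈ F) :
    univ.inf' univ_nonempty f ∈ F := by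
  classical
  have hY : (univ.image f).Nonempty := univ_nonempty.image f
  suffices (univ.image f).inf' hY id ∈ F by simpa [inf'_image] using this
  refine hF.2 _ hY fun X hX hXY hXn => ?_
  set T := X.image (invFun f)
  have hTX : T.image f = X := by
    rw [image_image]
    refine (image_congr fun y hy => ?_).trans image_id
    obtain ⟨i, -, rfl⟩ := mem_image.1 (hXY hy)
    exact invFun_eq ⟨i, rfl⟩
  have hT : T.Nonempty := hX.image _
  convert h T hT (card_image_le.trans hXn) using 1
  rw [← id_comp f, ← inf'_image (hTX ▸ hX)]
  exact inf'_congr _ hTX.symm fun _ _ => rfl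

theorem isPrimeUpset_iUnion [Lattice α] {ι : Type*} {P : ι → Set α}
    (hP : ∀ i, IsPrimeUpset (P i)) : IsPrimeUpset (⋃ i, P i) := by
  intro x y hxy
  obtain ⟨i, hi⟩ := Set.mem_iUnion.1 hxy
  exact (hP i x y hi).imp (Set.mem_iUnion_of_mem i) (Set.mem_iUnion_of_mem i)

theorem isNFilter_iUnion [Lattice α] {n : ℕ} {ι : Type*} [Fintype ι] [Nonempty ι]
    {P : ι → Set α} (hP : ∀ i, IsLatFilter (P i)) (hcard : Fintype.card ι ≤ n) :
    IsNFilter n (⋃ i, P i) := by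
  classical
  refine ⟨fun x y hx hxy => ?_, fun Y hY hYX => ?_⟩
  · obtain ⟨i, hi⟩ := Set.mem_iUnion.1 hx
    exact Set.mem_iUnion_of_mem i ((hP i).1 hi hxy)
  by_contra hnot
  have hout : ∀ i, ∃ y ∈ Y, y ∉ P i := fun i => by
    by_contra! hall
    exact hnot (Set.mem_iUnion_of_mem i
      (inf'_mem _ (fun x hx y hy => (hP i).2 x y hx hy) _ _ _ hall))
  choose y hyY hyP using hout
  obtain ⟨j, hj⟩ := Set.mem_iUnion.1 <| hYX (univ.image y) (univ_nonempty.image y)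
    (image_subset_iff.2 fun i _ => hyY i) (card_image_le.trans (by simpa using hcard))
  exact hyP j ((hP j).1 hj (inf'_le id (mem_image_of_mem y (mem_univ j))))

theorem exists_pairwise_inf_notMem [Lattice α] {F : Set α} (hF : IsUpset F) {ι : Type*}
    [Fintype ι] {P : ι → Set α} (hP : ∀ i, IsLatFilter (P i)) (hne : ∀ i, (P i).Nonempty)
    (hsep : Pairwise fun i j => ∃ a ∈ P i, ∃ b ∈ P j, a ⊓ b ∉ F) :
    ∃ x : ι → α, (∀ i, x i ∈ P i) ∧ Pairwise fun i j => x i ⊓ x j ∉ F := by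
  classical
  choose a ha b hb hab using hsep
  have hx : ∀ i, ∃ x ∈ P i, ∀ j : {j // j ≠ i}, x ≤ a j.2.symm ⊓ b j.2 := fun i =>
    (hP i).exists_le_forall (hne i) _ fun j => (hP i).2 _ _ (ha _) (hb _)
  choose x hxP hxle using hx
  refine ⟨x, hxP, fun i j hij h => hab hij (hF h (inf_le_inf ?_ ?_))⟩
  · exact (hxle i ⟨j, hij.symm⟩).trans inf_le_left
  · exact (hxle j ⟨i, hij⟩).trans inf_le_right

theorem card_le_of_pairwise_inf_notMem [DistribLattice α] {n : ℕ} {F : Set α}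
    (hFp : IsPrimeUpset F) (hFn : IsNFilter n F) (hn : 1 ≤ n) {ι : Type*} [Fintype ι]
    (x : ι → α) (hx : ∀ i, x i ∈ F) (hpair : Pairwise fun i j => x i ⊓ x j ∉ F) :
    Fintype.card ι ≤ n := by
  classical
  by_contra! hlt
  have hne : ∀ i, (univ.erase i).Nonempty := fun i =>
    let ⟨j, hj⟩ := Fintype.exists_ne_of_one_lt_card (hn.trans_lt hlt) i
    ⟨j, mem_erase.2 ⟨hj, mem_univ j⟩⟩
  obtain ⟨i⟩ : Nonempty ι := Fintype.card_pos_iff.1 (by omega)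
  have : Nonempty ι := ⟨i⟩
  -- Any `n` of the `s i` lie above a common `x k`, so their meet `y` is in `F`; applying
  -- primeness to `y ≤ s i` and then to `y ⊓ x j ≤ s j` yields `x j ⊓ x k ∈ F` with `j ≠ k`.
  set s : ι → α := fun i => (univ.erase i).sup' (hne i) x
  have hmem : univ.inf' univ_nonempty s ∈ F := by
    refine hFn.univ_inf'_mem s fun T hT hTn => ?_
    obtain ⟨k, -, hk⟩ := exists_mem_notMem_of_card_lt_card (s := T) (t := univ)
      (by simpa using hTn.trans_lt hlt)
    exact hFn.1 (hx k) (le_inf' _ _ fun j hj =>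
      le_sup' x (mem_erase.2 ⟨fun hkj : k = j => hk (hkj ▸ hj), mem_univ k⟩))
  obtain ⟨j, -, hyj⟩ := hFp.exists_inf_mem_of_le_sup' (hne i) hmem (inf'_le s (mem_univ i))
  obtain ⟨k, hk, hyjk⟩ := hFp.exists_inf_mem_of_le_sup' (hne j) hyj
    (inf_le_left.trans (inf'_le s (mem_univ j)))
  exact hpair (ne_of_mem_erase hk).symm (hFn.1 hyjk (inf_le_inf_right _ inf_le_right))

end Lattice

section MaximalFilter

variable {α : Type*}

def IsMaximalFilterIn [Lattice α] (F P : Set α) : Prop :=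
  Maximal (fun Q => IsLatFilter Q ∧ Q ⊆ F) P

theorem isLatFilter_sUnion_of_isChain [Lattice α] {c : Set (Set α)} (hc : IsChain (· ⊆ ·) c)
    (hfil : ∀ P ∈ c, IsLatFilter P) : IsLatFilter (⋃₀ c) := by
  refine ⟨?_, ?_⟩
  · rintro x y ⟨P, hP, hx⟩ hxy
    exact ⟨P, hP, (hfil P hP).1 hx hxy⟩
  · rintro x y ⟨P, hP, hx⟩ ⟨Q, hQ, hy⟩
    obtain hPQ | hQP := hc.total hP hQ
    · exact ⟨Q, hQ, (hfil Q hQ).2 x y (hPQ hx) hy⟩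
    · exact ⟨P, hP, (hfil P hP).2 x y hx (hQP hy)⟩

theorem exists_isMaximalFilterIn [Lattice α] {F H : Set α} (hH : IsLatFilter H) (hHF : H ⊆ F) :
    ∃ P, H ⊆ P ∧ IsMaximalFilterIn F P :=
  zorn_subset_nonempty {Q | IsLatFilter Q ∧ Q ⊆ F} (fun c hcS hc _ =>
    ⟨⋃₀ c, ⟨isLatFilter_sUnion_of_isChain hc fun _ hP => (hcS hP).1,
      Set.sUnion_subset fun _ hP => (hcS hP).2⟩, fun _ => Set.subset_sUnion_of_mem⟩) H ⟨hH, hHF⟩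

theorem IsMaximalFilterIn.exists_inf_notMem [Lattice α] {F P : Set α} (hF : IsUpset F)
    (hP : IsMaximalFilterIn F P) {b : α} (hbF : b ∈ F) (hbP : b ∉ P) : ∃ a ∈ P, a ⊓ b ∉ F := by
  by_contra! hPb
  set Q := {w | b ≤ w ∨ ∃ a ∈ P, a ⊓ b ≤ w}
  have hQ : IsLatFilter Q := by
    refine ⟨?_, ?_⟩
    · rintro x y (hx | ⟨a, ha, hx⟩) hxy
      exacts [Or.inl (hx.trans hxy), Or.inr ⟨a, ha, hx.trans hxy⟩]
    · rintro x y (hx | ⟨a, ha, hx⟩) (hy | ⟨a', ha', hy⟩)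
      · exact Or.inl (le_inf hx hy)
      · exact Or.inr ⟨a', ha', le_inf (inf_le_right.trans hx) hy⟩
      · exact Or.inr ⟨a, ha, le_inf hx (inf_le_right.trans hy)⟩
      · exact Or.inr ⟨a ⊓ a', hP.1.1.2 a a' ha ha',
          le_inf ((inf_le_inf_right b inf_le_left).trans hx)
            ((inf_le_inf_right b inf_le_right).trans hy)⟩
  have hQF : Q ⊆ F := by
    rintro w (hw | ⟨a, ha, hw⟩)
    exacts [hF hbF hw, hF (hPb a ha) hw]
  have hPQ : P ⊆ Q := fun a ha => Or.inr ⟨a, ha, inf_le_left⟩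
  have hbQ : b ∈ Q := Or.inl le_rfl
  exact hbP (Maximal.eq_of_subset hP ⟨hQ, hQF⟩ hPQ ▸ hbQ)

theorem IsMaximalFilterIn.exists_inf_notMem_of_ne [Lattice α] {F P Q : Set α} (hF : IsUpset F)
    (hP : IsMaximalFilterIn F P) (hQ : IsMaximalFilterIn F Q) (hne : P ≠ Q) :
    ∃ a ∈ P, ∃ b ∈ Q, a ⊓ b ∉ F := by
  obtain ⟨b, hbQ, hbP⟩ := Set.not_subset.1 fun hQP => hne (hQ.eq_of_subset hP.1 hQP).symm
  obtain ⟨a, ha, hab⟩ := hP.exists_inf_notMem hF (hQ.1.2 hbQ) hbP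
  exact ⟨a, ha, b, hbQ, hab⟩

theorem IsMaximalFilterIn.isPrimeUpset [DistribLattice α] {F P : Set α} (hFu : IsUpset F)
    (hFp : IsPrimeUpset F) (hP : IsMaximalFilterIn F P) : IsPrimeUpset P := by
  intro x y hxy
  by_contra! ⟨hx, hy⟩
  have hsep : ∀ z ∉ P, ∃ a ∈ P, a ⊓ z ∉ F := by
    intro z hz
    by_cases hzF : z ∈ F
    · exact hP.exists_inf_notMem hFu hzF hz
    · exact ⟨x ⊔ y, hxy, fun h => hzF (hFu h inf_le_right)⟩
  obtain ⟨p, hp, hpx⟩ := hsep x hx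
  obtain ⟨q, hq, hqy⟩ := hsep y hy
  have hmem : p ⊓ q ⊓ (x ⊔ y) ∈ F := hP.1.2 (hP.1.1.2 _ _ (hP.1.1.2 p q hp hq) hxy)
  rw [inf_sup_left] at hmem
  rcases hFp _ _ hmem with h | h
  · exact hpx (hFu h (inf_le_inf_right x inf_le_left))
  · exact hqy (hFu h (inf_le_inf_right y inf_le_right))

theorem card_le_of_isMaximalFilterIn [DistribLattice α] {n : ℕ} {F : Set α}
    (hFp : IsPrimeUpset F) (hFn : IsNFilter n F) (hn : 1 ≤ n) {ι : Type*} [Fintype ι]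
    {P : ι → Set α} (hP : ∀ i, IsMaximalFilterIn F (P i)) (hinj : Injective P) :
    Fintype.card ι ≤ n := by
  by_contra! hlt
  have hsep : Pairwise fun i j => ∃ a ∈ P i, ∃ b ∈ P j, a ⊓ b ∉ F := fun i j hij =>
    (hP i).exists_inf_notMem_of_ne hFn.1 (hP j) (hinj.ne hij)
  have hne : ∀ i, (P i).Nonempty := fun i =>
    let ⟨_, hj⟩ := Fintype.exists_ne_of_one_lt_card (hn.trans_lt hlt) i
    let ⟨a, ha, _⟩ := hsep hj.symm
    ⟨a, ha⟩
  obtain ⟨x, hxP, hx⟩ := exists_pairwise_inf_notMem hFn.1 (fun i => (hP i).1.1) hne hsep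
  exact hlt.not_ge (card_le_of_pairwise_inf_notMem hFp hFn hn x (fun i => (hP i).1.2 (hxP i)) hx)

end MaximalFilter

theorem IsNFilter.exists_primeFilter_cover {α : Type*} [DistribLattice α] {n : ℕ} {F : Set α}
    (hFn : IsNFilter n F) (hFp : IsPrimeUpset F) (hn : 1 ≤ n) :
    ∃ P : Fin n → Set α, (∀ i, IsLatFilter (P i) ∧ IsPrimeUpset (P i)) ∧ F = ⋃ i, P i := by
  obtain ⟨P, hP⟩ := Set.exists_fin_range_eq_of_forall_card_le (s := {P | IsMaximalFilterIn F P})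
    ((exists_isMaximalFilterIn isLatFilter_empty (Set.empty_subset F)).imp fun _ h => h.2)
    fun k f hf hfs => by
      simpa using card_le_of_isMaximalFilterIn hFp hFn hn (fun i => hfs ⟨i, rfl⟩) hf
  have hmax : ∀ i, IsMaximalFilterIn F (P i) := fun i => hP.subset ⟨i, rfl⟩
  refine ⟨P, fun i => ⟨(hmax i).1.1, (hmax i).isPrimeUpset hFn.1 hFp⟩,
    subset_antisymm (fun x hx => ?_) (Set.iUnion_subset fun i => (hmax i).1.2)⟩
  obtain ⟨Q, hxQ, hQ⟩ := exists_isMaximalFilterIn (isLatFilter_Ici x) fun _ hy => hFn.1 hx hy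
  obtain ⟨i, rfl⟩ := hP.symm.subset hQ
  exact Set.mem_iUnion_of_mem i (hxQ Set.self_mem_Ici)

section Homomorphism

variable {L : Type*} [DeMorgan L]

theorem DeMorgan.dneg_inf (x y : L) : ∼(x ⊓ y) = ∼x ⊔ ∼y := by
  rw [← DeMorgan.dneg_dneg (∼x ⊔ ∼y), DeMorgan.dneg_sup, DeMorgan.dneg_dneg, DeMorgan.dneg_dneg]

theorem dneg_bool_prod_mk (a b : Bool) : ∼(a, b) = (!b, !a) := rfl

theorem isDMHom_pi {ι : Type*} {h : ι → L → Bool × Bool} (hh : ∀ i, IsDMHom (h i)) :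
    IsDMHom fun x i => h i x :=
  ⟨fun x y => funext fun i => (hh i).1 x y, fun x y => funext fun i => (hh i).2.1 x y,
    fun x => funext fun i => (hh i).2.2 x⟩

theorem isDMHom_of_isPrimeFilter {P : Set L} [DecidablePred (· ∈ P)] (hP : IsLatFilter P)
    (hPp : IsPrimeUpset P) :
    IsDMHom fun x => (decide (x ∈ P), decide (∼x ∉ P)) := by
  have hinf : ∀ x y, x ⊓ y ∈ P ↔ x ∈ P ∧ y ∈ P := fun x y =>
    ⟨fun h => ⟨hP.1 h inf_le_left, hP.1 h inf_le_right⟩, fun h => hP.2 x y h.1 h.2⟩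
  have hsup : ∀ x y, x ⊔ y ∈ P ↔ x ∈ P ∨ y ∈ P := fun x y =>
    ⟨hPp x y, fun h => h.elim (hP.1 · le_sup_left) (hP.1 · le_sup_right)⟩
  refine ⟨fun x y => ?_, fun x y => ?_, fun x => ?_⟩
  · simp [hinf, hsup, DeMorgan.dneg_inf]
  · simp [hinf, hsup, DeMorgan.dneg_sup]
  · simp [dneg_bool_prod_mk, DeMorgan.dneg_dneg]

end Homomorphism

theorem statement3_general {L : Type*} [DeMorgan L] (n : ℕ) (hn : 1 ≤ n)
    (F : Set L) :
    (IsPrimeUpset F ∧ IsNFilter n F) ↔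
      ∃ h : L → (Fin n → Bool × Bool), IsDMHom h ∧
        F = {x : L | ∃ i : Fin n, (h x i).1 = true} := by
  classical
  constructor
  · rintro ⟨hFp, hFn⟩
    obtain ⟨P, hP, rfl⟩ := hFn.exists_primeFilter_cover hFp hn
    refine ⟨fun x i => (decide (x ∈ P i), decide (∼x ∉ P i)),
      isDMHom_pi fun i => isDMHom_of_isPrimeFilter (hP i).1 (hP i).2, ?_⟩
    ext x
    simp
  · rintro ⟨h, ⟨hinf, hsup, -⟩, rfl⟩
    have : Nonempty (Fin n) := ⟨⟨0, hn⟩⟩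
    have hF : {x | ∃ i, (h x i).1 = true} = ⋃ i, {x | (h x i).1 = true} := by
      ext
      simp
    rw [hF]
    refine ⟨isPrimeUpset_iUnion fun i => isPrimeUpset_setOf_eq_true fun x y => ?_,
      isNFilter_iUnion (fun i => isLatFilter_setOf_eq_true fun x y => ?_) (Fintype.card_fin n).le⟩
    · rw [hsup]; rfl
    · rw [hinf]; rfl

/-- prime `n`-filters on a De Morgan lattice are precisely the preimages of
the designated set `Qₙ` of `DMₙ` under De Morgan homomorphisms. -/
theorem statement3 {L : Type*} [DeMorgan L] [Nonempty L] (n : ℕ) (hn : 1 ≤ n)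
    (F : Set L) (hF : IsUpset F) :
    (IsPrimeUpset F ∧ IsNFilter n F) ↔
      ∃ h : L → (Fin n → Bool × Bool), IsDMHom h ∧
        F = {x : L | ∃ i : Fin n, (h x i).1 = true} :=
  statement3_general n hn F
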